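/- (Optimality criterion) Let (Z(S))_{S∈S^Λ} be a nonnegative S^Λ-system of class(D^Λ) and let Z̄ be its Λ-Snell envelope. A Λ-stopping time Ū maximizes E[Z(S)] over all S ∈ S^Λ if and only if: (i) Z(Ū) = Z̄_Ū P-a.s., and (ii) the stopped process (Z̄_{t∧Ū})_{t∈[0,∞]} is a Λ-martingale. -/

import Mathlib

/-!
Always `E Z(S) ≤ E Z̄_S ≤ E Z̄_0`. If `Ū` is optimal, pasting a competitor `T` with `Ū` along the
`F^Λ_0`-event where `T` does better conditionally shows `E[Z(T) | F^Λ_0] ≤ E[Z(Ū) | F^Λ_0]`, so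
minimality of the Snell envelope gives `E Z̄_0 ≤ E Z(Ū) ≤ E Z̄_Ū ≤ E Z̄_0`. Equality in
`Z(Ū) ≤ Z̄_Ū` is (i); the stopped envelope `Z̄^Ū` is a supermartingale whose expectation at every
stopping time is squeezed to this common value, hence a martingale, which is (ii). Conversely,
(ii) gives `E Z̄_0 = E Z̄_Ū`, and this is `E Z(Ū)` by (i).

The measure-theoretic input is that stopping at a `Λ`-stopping time preserves `Λ`-measurability
(`measurable_stopMap`), which rests on `Λ` being generated by càdlàg processes.
-/

open MeasureTheory Filter Set Topology
open scoped NNReal ENNReal symmDiff Classical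

noncomputable section

namespace Meyer

variable {Ω : Type*}

/-- The σ-field generated by a family of real-valued functions. -/
def genBy {α : Type*} (C : Set (α → ℝ)) : MeasurableSpace α :=
  ⨆ f ∈ C, MeasurableSpace.comap f inferInstance

/-- A function is càdlàg: right-continuous with left limits. -/
def IsCadlag (f : ℝ≥0 → ℝ) : Prop :=
  (∀ t, Tendsto f (𝓝[≥] t) (𝓝 (f t))) ∧
  ∀ t : ℝ≥0, 0 < t → ∃ l, Tendsto f (𝓝[<] t) (𝓝 l)

/-- A Meyer-σ-field over `(Ω, mΩ)`: a σ-field on `Ω × [0,∞)` contained in the product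
σ-field, generated by càdlàg processes, containing `{∅,Ω} × B([0,∞))` and stable under
stopping at deterministic times. -/
structure IsMeyer (mΩ : MeasurableSpace Ω) (Λ : MeasurableSpace (Ω × ℝ≥0)) : Prop where
  le_prod : Λ ≤ @Prod.instMeasurableSpace Ω ℝ≥0 mΩ inferInstance
  gen_cadlag : ∃ C : Set (Ω × ℝ≥0 → ℝ),
    (∀ Z ∈ C, ∀ ω, IsCadlag fun t => Z (ω, t)) ∧ Λ = genBy C
  contains_borel : ∀ B : Set ℝ≥0, MeasurableSet B → MeasurableSet[Λ] (Set.univ ×ˢ B)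
  stop_stable : ∀ Z : Ω × ℝ≥0 → ℝ, Measurable[Λ] Z → ∀ s : ℝ≥0,
    Measurable[Λ] fun p => Z (p.1, min p.2 s)

/-- A `Λ`-stopping time: `[[S,∞[[ ∈ Λ`. -/
def IsStoppingTimeM (Λ : MeasurableSpace (Ω × ℝ≥0)) (S : Ω → ℝ≥0∞) : Prop :=
  MeasurableSet[Λ] {p : Ω × ℝ≥0 | S p.1 ≤ (p.2 : ℝ≥0∞)}

/-- The associated filtration `F^Λ_t := σ(Z_t : Z Λ-measurable)`. -/
def sigmaAt (Λ : MeasurableSpace (Ω × ℝ≥0)) (t : ℝ≥0) : MeasurableSpace Ω :=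
  genBy {f : Ω → ℝ | ∃ Z : Ω × ℝ≥0 → ℝ, Measurable[Λ] Z ∧ f = fun ω => Z (ω, t)}

/-- `F^Λ_∞`. -/
def sigmaInf (Λ : MeasurableSpace (Ω × ℝ≥0)) : MeasurableSpace Ω := ⨆ t : ℝ≥0, sigmaAt Λ t

/-- A process indexed by `[0,∞]` is `Λ`-measurable if its restriction to `Ω × [0,∞)`
is `Λ`-measurable and its value at `∞` is `F^Λ_∞`-measurable. -/
def MeasurableProcessE (Λ : MeasurableSpace (Ω × ℝ≥0)) (Z : Ω × ℝ≥0∞ → ℝ) : Prop :=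
  Measurable[Λ] (fun p : Ω × ℝ≥0 => Z (p.1, (p.2 : ℝ≥0∞))) ∧
  Measurable[sigmaInf Λ] fun ω => Z (ω, ∞)

/-- `F^Λ_S := σ(Z_S : Z a Λ-measurable process on [0,∞])`. -/
def sigmaAtTime (Λ : MeasurableSpace (Ω × ℝ≥0)) (S : Ω → ℝ≥0∞) : MeasurableSpace Ω :=
  genBy {f : Ω → ℝ | ∃ Z : Ω × ℝ≥0∞ → ℝ, MeasurableProcessE Λ Z ∧ f = fun ω => Z (ω, S ω)}

/-- `S_A`: equal to `S` on `A` and `∞` off `A`. -/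
def restrictST (S : Ω → ℝ≥0∞) (A : Set Ω) : Ω → ℝ≥0∞ := fun ω => if ω ∈ A then S ω else ∞

/-- Evaluation of a process indexed by `[0,∞]` at a random time. -/
def EvalAt (Z : Ω × ℝ≥0∞ → ℝ) (S : Ω → ℝ≥0∞) : Ω → ℝ := fun ω => Z (ω, S ω)

/-- Evaluation of a process indexed by `[0,∞)` at a (finite) random time. -/
def EvalAtF (Z : Ω × ℝ≥0 → ℝ) (S : Ω → ℝ≥0∞) : Ω → ℝ := fun ω => Z (ω, (S ω).toNNReal)

/-- Adaptedness of a process to a raw filtration. -/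
def Adapted' (G : ℝ≥0 → MeasurableSpace Ω) (Z : Ω × ℝ≥0 → ℝ) : Prop :=
  ∀ t, Measurable[G t] fun ω => Z (ω, t)

/-- Predictable σ-field of a filtration: generated by continuous adapted processes. -/
def predSF (G : ℝ≥0 → MeasurableSpace Ω) : MeasurableSpace (Ω × ℝ≥0) :=
  genBy {Z | (∀ ω, Continuous fun t => Z (ω, t)) ∧ Adapted' G Z}

/-- Optional σ-field of a filtration: generated by càdlàg adapted processes. -/
def optSF (G : ℝ≥0 → MeasurableSpace Ω) : MeasurableSpace (Ω × ℝ≥0) :=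
  genBy {Z | (∀ ω, IsCadlag fun t => Z (ω, t)) ∧ Adapted' G Z}

/-- Classical stopping time of a raw filtration. -/
def IsStoppingTimeCl (G : ℝ≥0 → MeasurableSpace Ω) (T : Ω → ℝ≥0∞) : Prop :=
  ∀ t : ℝ≥0, MeasurableSet[G t] {ω | T ω ≤ (t : ℝ≥0∞)}

/-- The right-continuous filtration `F^Λ_{t+}`. -/
def FplusLambda (Λ : MeasurableSpace (Ω × ℝ≥0)) (t : ℝ≥0) : MeasurableSpace Ω :=
  ⨅ (s : ℝ≥0) (_ : t < s), sigmaAt Λ s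

/-- Two processes are indistinguishable. -/
def Indistinguishable {τ : Type*} [MeasurableSpace Ω] (P : Measure Ω)
    (X Y : Ω × τ → ℝ) : Prop :=
  P {ω | ∃ t, X (ω, t) ≠ Y (ω, t)} = 0

/-- `Λ` is `P`-complete: every product-measurable process indistinguishable from a
`Λ`-measurable process is itself `Λ`-measurable. -/
def IsPCompleteM [mΩ : MeasurableSpace Ω] (P : Measure Ω)
    (Λ : MeasurableSpace (Ω × ℝ≥0)) : Prop :=
  ∀ Z Z' : Ω × ℝ≥0 → ℝ, Measurable Z → Measurable[Λ] Z' →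
    Indistinguishable P Z Z' → Measurable[Λ] Z

/-- A raw filtration satisfies the usual conditions: monotone, sub-σ-fields of `mΩ`,
right-continuous and `P`-complete. -/
def UsualConditions [mΩ : MeasurableSpace Ω] (P : Measure Ω)
    (G : ℝ≥0 → MeasurableSpace Ω) : Prop :=
  Monotone G ∧ (∀ t, G t ≤ mΩ) ∧
  (∀ t : ℝ≥0, G t = ⨅ (s : ℝ≥0) (_ : t < s), G s) ∧
  ∀ N : Set Ω, MeasurableSet N → P N = 0 → MeasurableSet[G 0] N

variable [mΩ : MeasurableSpace Ω]

/-- `Λ`-martingale (indexed by `[0,∞]`). -/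
def IsMartingaleM (P : Measure Ω) (Λ : MeasurableSpace (Ω × ℝ≥0))
    (Z : Ω × ℝ≥0∞ → ℝ) : Prop :=
  MeasurableProcessE Λ Z ∧
  (∀ S, IsStoppingTimeM Λ S → Integrable (EvalAt Z S) P) ∧
  ∀ S T : Ω → ℝ≥0∞, IsStoppingTimeM Λ S → IsStoppingTimeM Λ T → S ≤ T →
    EvalAt Z S =ᵐ[P] P[EvalAt Z T|sigmaAtTime Λ S]

/-- `Λ`-supermartingale (indexed by `[0,∞]`). -/
def IsSupermartingaleM (P : Measure Ω) (Λ : MeasurableSpace (Ω × ℝ≥0))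
    (Z : Ω × ℝ≥0∞ → ℝ) : Prop :=
  MeasurableProcessE Λ Z ∧
  (∀ S, IsStoppingTimeM Λ S → Integrable (EvalAt Z S) P) ∧
  ∀ S T : Ω → ℝ≥0∞, IsStoppingTimeM Λ S → IsStoppingTimeM Λ T → S ≤ T →
    P[EvalAt Z T|sigmaAtTime Λ S] ≤ᵐ[P] EvalAt Z S

/-- Class `(D^Λ)` for a process: uniform integrability of `{Z_T : T ∈ S^Λ}`. -/
def ClassD (P : Measure Ω) (Λ : MeasurableSpace (Ω × ℝ≥0)) (Z : Ω × ℝ≥0∞ → ℝ) : Prop :=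
  UniformIntegrable (fun S : {S : Ω → ℝ≥0∞ // IsStoppingTimeM Λ S} => EvalAt Z S.1) 1 P

/-- Class `(D^Λ)` for a system. -/
def ClassDSys (P : Measure Ω) (Λ : MeasurableSpace (Ω × ℝ≥0))
    (ZS : (Ω → ℝ≥0∞) → Ω → ℝ) : Prop :=
  UniformIntegrable (fun S : {S : Ω → ℝ≥0∞ // IsStoppingTimeM Λ S} => ZS S.1) 1 P

/-- `pY` is a `Λ`-projection of `Y` (processes indexed by `[0,∞]`). -/
def IsProjectionE (P : Measure Ω) (Λ : MeasurableSpace (Ω × ℝ≥0))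
    (Y pY : Ω × ℝ≥0∞ → ℝ) : Prop :=
  MeasurableProcessE Λ pY ∧
  ∀ S, IsStoppingTimeM Λ S → (∀ ω, S ω < ∞) →
    EvalAt pY S =ᵐ[P] P[EvalAt Y S|sigmaAtTime Λ S]

/-- `pY` is a `Λ`-projection of `Y` (processes indexed by `[0,∞)`). -/
def IsProjectionF (P : Measure Ω) (Λ : MeasurableSpace (Ω × ℝ≥0))
    (Y pY : Ω × ℝ≥0 → ℝ) : Prop :=
  Measurable[Λ] pY ∧
  ∀ S, IsStoppingTimeM Λ S → (∀ ω, S ω < ∞) →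
    EvalAtF pY S =ᵐ[P] P[EvalAtF Y S|sigmaAtTime Λ S]

/-- Right-upper-semicontinuous envelope `Z^*` (with `Z^*_∞ := Z_∞`). -/
def rightLimsup (Z : Ω × ℝ≥0∞ → ℝ) (ω : Ω) (t : ℝ≥0∞) : ℝ :=
  if t = ∞ then Z (ω, ∞)
  else limsup (fun s : ℝ≥0 => Z (ω, (s : ℝ≥0∞))) (𝓝[>] t.toNNReal)

/-- Right-lower-semicontinuous envelope `Z_*` (with `Z_{∞*} := Z_∞`). -/
def rightLiminf (Z : Ω × ℝ≥0∞ → ℝ) (ω : Ω) (t : ℝ≥0∞) : ℝ :=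
  if t = ∞ then Z (ω, ∞)
  else liminf (fun s : ℝ≥0 => Z (ω, (s : ℝ≥0∞))) (𝓝[>] t.toNNReal)

/-- Left-upper-semicontinuous envelope `*Z` (with `*Z_0 := Z_0` and
`*Z_∞ := limsup_{t↑∞} Z_t`). -/
def leftLimsup (Z : Ω × ℝ≥0∞ → ℝ) (ω : Ω) (t : ℝ≥0∞) : ℝ :=
  if t = 0 then Z (ω, 0)
  else if t = ∞ then limsup (fun s : ℝ≥0 => Z (ω, (s : ℝ≥0∞))) atTop
  else limsup (fun s : ℝ≥0 => Z (ω, (s : ℝ≥0∞))) (𝓝[<] t.toNNReal)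

/-- Left-lower-semicontinuous envelope `_*Z`. -/
def leftLiminf (Z : Ω × ℝ≥0∞ → ℝ) (ω : Ω) (t : ℝ≥0∞) : ℝ :=
  if t = 0 then Z (ω, 0)
  else if t = ∞ then liminf (fun s : ℝ≥0 => Z (ω, (s : ℝ≥0∞))) atTop
  else liminf (fun s : ℝ≥0 => Z (ω, (s : ℝ≥0∞))) (𝓝[<] t.toNNReal)

/-- `T` is `Λ`-accessible. -/
def IsAccessibleM [mΩ2 : MeasurableSpace Ω] (P : Measure Ω)
    (Λ : MeasurableSpace (Ω × ℝ≥0)) (T : Ω → ℝ≥0∞) : Prop :=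
  ∃ Tn : ℕ → Ω → ℝ≥0∞, (∀ n, IsStoppingTimeM Λ (Tn n)) ∧
    P (⋃ n, {ω | Tn n ω = T ω ∧ T ω < ∞}) = P {ω | T ω < ∞}

/-- `T` is totally `Λ`-inaccessible. -/
def IsTotallyInaccessibleM [mΩ2 : MeasurableSpace Ω] (P : Measure Ω)
    (Λ : MeasurableSpace (Ω × ℝ≥0)) (T : Ω → ℝ≥0∞) : Prop :=
  ∀ S, IsStoppingTimeM Λ S → P {ω | S ω = T ω ∧ T ω < ∞} = 0

/-- The σ-field `G_{T-}`: generated by `G_0` and the sets `A ∩ {t < T}`, `A ∈ G_t`. -/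
def sigmaPre (G : ℝ≥0 → MeasurableSpace Ω) (T : Ω → ℝ≥0∞) : MeasurableSpace Ω :=
  MeasurableSpace.generateFrom
    ({A | MeasurableSet[G 0] A} ∪
      {A | ∃ (t : ℝ≥0) (B : Set Ω), MeasurableSet[G t] B ∧ A = B ∩ {ω | (t : ℝ≥0∞) < T ω}})

/-- The σ-field `G_T` of a classical stopping time `T`. -/
def sigmaAtCl (G : ℝ≥0 → MeasurableSpace Ω) (T : Ω → ℝ≥0∞) : MeasurableSpace Ω :=
  MeasurableSpace.generateFrom
    {A | ∀ t : ℝ≥0, MeasurableSet[G t] (A ∩ {ω | T ω ≤ (t : ℝ≥0∞)})}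

/-- A divided stopping time `σ = (T, W⁻, W, W⁺)`. -/
structure IsDividedST (Λ : MeasurableSpace (Ω × ℝ≥0)) (T : Ω → ℝ≥0∞)
    (Wm W Wp : Set Ω) : Prop where
  stopping : IsStoppingTimeCl (FplusLambda Λ) T
  cover : Wm ∪ W ∪ Wp = Set.univ
  disj_mw : Wm ∩ W = ∅
  disj_mp : Wm ∩ Wp = ∅
  disj_wp : W ∩ Wp = ∅
  mem_m : MeasurableSet[sigmaPre (FplusLambda Λ) T] Wm
  m_pos : Wm ∩ {ω | T ω = 0} = ∅
  mem_w : MeasurableSet[sigmaAtTime Λ T] W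
  mem_p : MeasurableSet[sigmaAtCl (FplusLambda Λ) T] Wp
  p_fin : Wp ∩ {ω | T ω = ∞} = ∅
  pred_m : IsStoppingTimeM (predSF (FplusLambda Λ)) (restrictST T Wm)
  st_w : IsStoppingTimeM Λ (restrictST T W)

/-- The value `Z_σ` of a process at a divided stopping time. -/
def divEval (Z : Ω × ℝ≥0∞ → ℝ) (T : Ω → ℝ≥0∞) (Wm W Wp : Set Ω) : Ω → ℝ := fun ω =>
  if ω ∈ Wm then leftLimsup Z ω (T ω)
  else if ω ∈ W then Z (ω, T ω)
  else rightLimsup Z ω (T ω)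

/-- `Zb` is the `Λ`-Snell envelope of the system `ZS`: a `Λ`-supermartingale which at
each `Λ`-stopping time `S` is (a version of) `ess sup_{T ∈ S^Λ, T ≥ S} E[Z(T) | F^Λ_S]`. -/
def IsSnellSys (P : Measure Ω) (Λ : MeasurableSpace (Ω × ℝ≥0))
    (ZS : (Ω → ℝ≥0∞) → Ω → ℝ) (Zb : Ω × ℝ≥0∞ → ℝ) : Prop :=
  IsSupermartingaleM P Λ Zb ∧
  ∀ S, IsStoppingTimeM Λ S →
    (∀ T, IsStoppingTimeM Λ T → S ≤ T →
      P[ZS T|sigmaAtTime Λ S] ≤ᵐ[P] EvalAt Zb S) ∧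
    ∀ U : Ω → ℝ,
      (∀ T, IsStoppingTimeM Λ T → S ≤ T → P[ZS T|sigmaAtTime Λ S] ≤ᵐ[P] U) →
      EvalAt Zb S ≤ᵐ[P] U

/-- `Zb` is the `Λ`-Snell envelope of the process `Z`. -/
def IsSnellProc (P : Measure Ω) (Λ : MeasurableSpace (Ω × ℝ≥0))
    (Z Zb : Ω × ℝ≥0∞ → ℝ) : Prop :=
  IsSnellSys P Λ (fun S => EvalAt Z S) Zb

/-- An `S^Λ`-system. -/
def IsSystemM (P : Measure Ω) (Λ : MeasurableSpace (Ω × ℝ≥0))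
    (ZS : (Ω → ℝ≥0∞) → Ω → ℝ) : Prop :=
  (∀ S T, IsStoppingTimeM Λ S → IsStoppingTimeM Λ T →
    ∀ᵐ ω ∂P, S ω = T ω → ZS S ω = ZS T ω) ∧
  ∀ S, IsStoppingTimeM Λ S → Measurable[sigmaAtTime Λ S] (ZS S)

/-- An `S^Λ`-supermartingale system. -/
def IsSupermartingaleSystem (P : Measure Ω) (Λ : MeasurableSpace (Ω × ℝ≥0))
    (ZS : (Ω → ℝ≥0∞) → Ω → ℝ) : Prop :=
  IsSystemM P Λ ZS ∧ (∀ S, IsStoppingTimeM Λ S → Integrable (ZS S) P) ∧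
  ∀ S T, IsStoppingTimeM Λ S → IsStoppingTimeM Λ T → S ≤ T →
    P[ZS T|sigmaAtTime Λ S] ≤ᵐ[P] ZS S

/-- The process `Zb` aggregates the system `ZS`. -/
def Aggregates (P : Measure Ω) (Λ : MeasurableSpace (Ω × ℝ≥0))
    (Zb : Ω × ℝ≥0∞ → ℝ) (ZS : (Ω → ℝ≥0∞) → Ω → ℝ) : Prop :=
  ∀ S, IsStoppingTimeM Λ S → EvalAt Zb S =ᵐ[P] ZS S

/-- `pY` is the `F`-predictable projection of `Y` (with the convention `(^P Y)_∞ = 0`). -/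
def IsPredProjE (P : Measure Ω) (G : ℝ≥0 → MeasurableSpace Ω)
    (Y pY : Ω × ℝ≥0∞ → ℝ) : Prop :=
  MeasurableProcessE (predSF G) pY ∧ (∀ ω, pY (ω, ∞) = 0) ∧
  ∀ S, IsStoppingTimeM (predSF G) S → (∀ ω, S ω < ∞) →
    EvalAt pY S =ᵐ[P] P[EvalAt Y S|sigmaAtTime (predSF G) S]

end Meyer

namespace Meyer

section GeneratedSigmaAlgebra

variable {α β : Type*}

lemma measurable_genBy {m : MeasurableSpace α} {C : Set (β → ℝ)} {g : α → β}
    (h : ∀ f ∈ C, Measurable[m] (f ∘ g)) : Measurable[m, genBy C] g := by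
  rw [measurable_iff_comap_le, genBy, MeasurableSpace.comap_iSup]
  refine iSup_le fun f => ?_
  rw [MeasurableSpace.comap_iSup]
  refine iSup_le fun hf => ?_
  rw [MeasurableSpace.comap_comp]
  exact measurable_iff_comap_le.1 (h f hf)

lemma measurable_genBy_of_mem {C : Set (α → ℝ)} {f : α → ℝ} (hf : f ∈ C) :
    Measurable[genBy C] f :=
  measurable_iff_comap_le.2 <|
    le_iSup₂ (f := fun f _ => MeasurableSpace.comap f inferInstance) f hf

lemma genBy_le {C : Set (α → ℝ)} {m : MeasurableSpace α} (h : ∀ f ∈ C, Measurable[m] f) :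
    genBy C ≤ m :=
  iSup₂_le fun f hf => measurable_iff_comap_le.1 (h f hf)

end GeneratedSigmaAlgebra

lemma measurable_of_eqOn_iUnion {α β ι : Type*} [MeasurableSpace α] [MeasurableSpace β]
    [Countable ι] {t : ι → Set α} (ht : ∀ i, MeasurableSet (t i)) (hcover : ⋃ i, t i = univ)
    {f : ι → α → β} (hf : ∀ i, Measurable (f i)) {g : α → β} (hg : ∀ i, EqOn g (f i) (t i)) :
    Measurable g := by
  intro s hs
  have : g ⁻¹' s = ⋃ i, t i ∩ f i ⁻¹' s := by
    ext x
    obtain ⟨i, hi⟩ := mem_iUnion.1 (hcover.ge (mem_univ x))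
    simp only [mem_preimage, mem_iUnion, mem_inter_iff]
    exact ⟨fun hx => ⟨i, hi, hg i hi ▸ hx⟩, fun ⟨j, hj, hx⟩ => (hg j hj).symm ▸ hx⟩
  rw [this]
  exact .iUnion fun i => (ht i).inter (hf i hs)

section StoppingTimes

variable {Ω : Type*} {Λ : MeasurableSpace (Ω × ℝ≥0)} {S T U : Ω → ℝ≥0∞}

namespace IsStoppingTimeM

lemma zero : IsStoppingTimeM Λ 0 := by
  simp [IsStoppingTimeM]

lemma top : IsStoppingTimeM Λ ⊤ := by
  simp [IsStoppingTimeM]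

lemma inf (hS : IsStoppingTimeM Λ S) (hT : IsStoppingTimeM Λ T) : IsStoppingTimeM Λ (S ⊓ T) := by
  have : {p : Ω × ℝ≥0 | (S ⊓ T) p.1 ≤ p.2} = {p | S p.1 ≤ p.2} ∪ {p | T p.1 ≤ p.2} := by
    ext p; simp [inf_le_iff]
  unfold IsStoppingTimeM
  rw [this]
  exact hS.union hT

end IsStoppingTimeM

end StoppingTimes

section Dyadic

variable {Ω : Type*} (S : Ω → ℝ≥0∞) (n : ℕ)

def dyadic (n k : ℕ) : ℝ≥0 := k / 2 ^ n

def dyadicIndex (ω : Ω) : ℕ := ⌈(S ω).toNNReal * 2 ^ n⌉₊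

def dyadicApprox (ω : Ω) : ℝ≥0∞ := if S ω = ∞ then ∞ else dyadic n (dyadicIndex S n ω)

variable {S n}

lemma dyadic_mono {j k : ℕ} (h : j ≤ k) : dyadic n j ≤ dyadic n k := by
  unfold dyadic
  gcongr

lemma le_dyadic_iff {ω : Ω} (k : ℕ) : S ω ≤ dyadic n k ↔ S ω ≠ ∞ ∧ dyadicIndex S n ω ≤ k := by
  rcases eq_or_ne (S ω) ∞ with h | h
  · simp [h]
  · rw [← ENNReal.coe_toNNReal h, ENNReal.coe_le_coe, dyadic,
      le_div_iff₀ (pow_pos two_pos n), dyadicIndex, Nat.ceil_le]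
    simp

lemma le_dyadicApprox (ω : Ω) : S ω ≤ dyadicApprox S n ω := by
  unfold dyadicApprox
  split_ifs with h
  · exact le_top
  · exact (le_dyadic_iff _).2 ⟨h, le_rfl⟩

lemma dyadic_dyadicIndex_le (ω : Ω) :
    dyadic n (dyadicIndex S n ω) ≤ (S ω).toNNReal + (2 ^ n)⁻¹ := by
  rw [dyadic, div_le_iff₀ (pow_pos two_pos n), add_mul, inv_mul_cancel₀ (by positivity)]
  exact (Nat.ceil_lt_add_one zero_le).le

lemma tendsto_dyadicApprox (ω : Ω) :
    Tendsto (fun n => dyadicApprox S n ω) atTop (𝓝 (S ω)) := by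
  rcases eq_or_ne (S ω) ∞ with h | h
  · simp [dyadicApprox, h]
  simp only [dyadicApprox, h, if_false]
  rw [← ENNReal.coe_toNNReal h, ENNReal.tendsto_coe]
  have hpow : Tendsto (fun n : ℕ => ((2 : ℝ≥0) ^ n)⁻¹) atTop (𝓝 0) := by
    simpa only [inv_pow] using
      NNReal.tendsto_pow_atTop_nhds_zero_of_lt_one (r := 2⁻¹) (by norm_num)
  refine tendsto_of_tendsto_of_tendsto_of_le_of_le tendsto_const_nhds
    (by simpa using tendsto_const_nhds.add hpow) (fun n => ?_) (fun n => dyadic_dyadicIndex_le ω)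
  have := le_dyadicApprox (S := S) (n := n) ω
  simp only [dyadicApprox, h, if_false] at this
  rwa [← ENNReal.coe_toNNReal h, ENNReal.coe_le_coe] at this

/-- `(ω, t) ↦ (ω, t ∧ S ω)`; the minimum is finite, so `toNNReal` loses nothing. -/
def stopMap (S : Ω → ℝ≥0∞) (p : Ω × ℝ≥0) : Ω × ℝ≥0 :=
  (p.1, (min (p.2 : ℝ≥0∞) (S p.1)).toNNReal)

lemma coe_stopMap_snd (S : Ω → ℝ≥0∞) (p : Ω × ℝ≥0) :
    ((stopMap S p).2 : ℝ≥0∞) = min (p.2 : ℝ≥0∞) (S p.1) :=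
  ENNReal.coe_toNNReal (min_lt_of_left_lt ENNReal.coe_lt_top).ne

lemma tendsto_stopMap_dyadicApprox (p : Ω × ℝ≥0) :
    Tendsto (fun n => (stopMap (dyadicApprox S n) p).2) atTop (𝓝[≥] (stopMap S p).2) := by
  have hfin : ∀ a : ℝ≥0∞, min (p.2 : ℝ≥0∞) a ≠ ∞ := fun _ =>
    (min_lt_of_left_lt ENNReal.coe_lt_top).ne
  refine tendsto_nhdsWithin_iff.2 ⟨(ENNReal.tendsto_toNNReal (hfin _)).comp
    (tendsto_const_nhds.min (tendsto_dyadicApprox p.1)), .of_forall fun n => ?_⟩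
  exact ENNReal.toNNReal_mono (hfin _) (min_le_min_left _ (le_dyadicApprox p.1))

end Dyadic

section MeyerSigmaField

variable {Ω : Type*} [mΩ : MeasurableSpace Ω] {Λ : MeasurableSpace (Ω × ℝ≥0)}
  {S T U : Ω → ℝ≥0∞}

lemma IsMeyer.measurable_stopAt (hΛ : IsMeyer mΩ Λ) (s : ℝ≥0) :
    Measurable[Λ, Λ] fun p : Ω × ℝ≥0 => (p.1, min p.2 s) := by
  intro D hD
  refine (measurable_indicator_const_iff (1 : ℝ)).1 ?_
  convert hΛ.stop_stable _ (measurable_one.indicator hD) s using 1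
  ext p
  simp [Set.indicator_apply]

lemma measurableSet_setOf_le_prod_Ici (hΛ : IsMeyer mΩ Λ) (hS : IsStoppingTimeM Λ S)
    {s s' : ℝ≥0} (h : s ≤ s') : MeasurableSet[Λ] ({ω | S ω ≤ s} ×ˢ Ici s') := by
  have : {ω | S ω ≤ s} ×ˢ Ici s' =
      (fun p : Ω × ℝ≥0 => (p.1, min p.2 s)) ⁻¹' {p | S p.1 ≤ p.2} ∩ univ ×ˢ Ici s' := by
    ext ⟨ω, t⟩
    simp only [mem_prod, mem_ofPred_eq, mem_Ici, mem_inter_iff, mem_preimage, mem_univ, true_and]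
    exact and_congr_left fun ht => by rw [min_eq_right (h.trans ht)]
  rw [this]
  exact (hΛ.measurable_stopAt s hS).inter (hΛ.contains_borel _ measurableSet_Ici)

lemma measurableSet_dyadicPiece (hΛ : IsMeyer mΩ Λ) (hS : IsStoppingTimeM Λ S) (n k : ℕ) :
    MeasurableSet[Λ]
      {p : Ω × ℝ≥0 | S p.1 ≠ ∞ ∧ dyadicIndex S n p.1 = k ∧ dyadic n k ≤ p.2} := by
  have : {p : Ω × ℝ≥0 | S p.1 ≠ ∞ ∧ dyadicIndex S n p.1 = k ∧ dyadic n k ≤ p.2} =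
      {ω | S ω ≤ dyadic n k} ×ˢ Ici (dyadic n k) \
        ⋃ j ∈ Finset.range k, {ω | S ω ≤ dyadic n j} ×ˢ Ici (dyadic n k) := by
    ext ⟨ω, t⟩
    simp only [mem_ofPred_eq, Set.mem_sdiff, mem_prod, mem_Ici, mem_iUnion, Finset.mem_range,
      le_dyadic_iff, exists_prop, not_exists, not_and]
    constructor
    · rintro ⟨hS, rfl, ht⟩
      exact ⟨⟨⟨hS, le_rfl⟩, ht⟩, fun j hj _ hle => absurd hle (by omega)⟩
    · rintro ⟨⟨⟨hS, hk⟩, ht⟩, hlt⟩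
      refine ⟨hS, ?_, ht⟩
      by_contra hne
      exact hlt _ (by omega) ⟨hS, le_rfl⟩ ht
  rw [this]
  exact (measurableSet_setOf_le_prod_Ici hΛ hS le_rfl).diff <| .biUnion (to_countable _)
    fun j hj => measurableSet_setOf_le_prod_Ici hΛ hS (dyadic_mono (Finset.mem_range.1 hj).le)

end MeyerSigmaField

section StopMap

variable {Ω : Type*} [mΩ : MeasurableSpace Ω] {Λ : MeasurableSpace (Ω × ℝ≥0)}
  {S T U : Ω → ℝ≥0∞}

lemma measurable_comp_stopMap_dyadicApprox (hΛ : IsMeyer mΩ Λ) (hS : IsStoppingTimeM Λ S)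
    {f : Ω × ℝ≥0 → ℝ} (hf : Measurable[Λ] f) (n : ℕ) :
    Measurable[Λ] (f ∘ stopMap (dyadicApprox S n)) := by
  -- Where the approximation `k / 2ⁿ` has been reached, stopping at it is stopping at the
  -- deterministic time `k / 2ⁿ`; before it, nothing is stopped.
  set piece : ℕ → Set (Ω × ℝ≥0) :=
    fun k => {p | S p.1 ≠ ∞ ∧ dyadicIndex S n p.1 = k ∧ dyadic n k ≤ p.2}
  have hpiece : ∀ k, MeasurableSet[Λ] (piece k) := measurableSet_dyadicPiece hΛ hS n
  refine measurable_of_eqOn_iUnion (ι := Option ℕ) (t := fun o => o.elim (⋃ k, piece k)ᶜ piece)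
    (f := fun o => o.elim f fun k => f ∘ fun p => (p.1, min p.2 (dyadic n k)))
    ?_ ?_ ?_ ?_
  · rintro (_ | k)
    exacts [(MeasurableSet.iUnion hpiece).compl, hpiece k]
  · simp only [iUnion_option, Option.elim]
    exact compl_union_self _
  · rintro (_ | k)
    exacts [hf, hf.comp (hΛ.measurable_stopAt _)]
  · rintro (_ | k) ⟨ω, t⟩ hp
    · suffices (t : ℝ≥0∞) ≤ dyadicApprox S n ω by simp [stopMap, min_eq_left this]
      simp only [Option.elim, mem_compl_iff, mem_iUnion, not_exists] at hp
      unfold dyadicApprox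
      split_ifs with hfin
      · exact le_top
      · exact ENNReal.coe_le_coe.2 (not_le.1 fun h => hp _ ⟨hfin, rfl, h⟩).le
    · obtain ⟨hfin, rfl, ht⟩ := hp
      simp [stopMap, dyadicApprox, hfin, ht]

/-- On a càdlàg generator of `Λ`, stopping at `S` is the right limit of stopping at the dyadic
approximations of `S` from above. -/
lemma measurable_stopMap (hΛ : IsMeyer mΩ Λ) (hS : IsStoppingTimeM Λ S) :
    Measurable[Λ, Λ] (stopMap S) := by
  obtain ⟨C, hcadlag, hΛC⟩ := hΛ.gen_cadlag
  have h : Measurable[Λ, genBy C] (stopMap S) := by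
    refine measurable_genBy fun f hf => ?_
    have hfΛ : Measurable[Λ] f := hΛC ▸ measurable_genBy_of_mem hf
    refine measurable_of_tendsto_metrizable' atTop
      (measurable_comp_stopMap_dyadicApprox hΛ hS hfΛ) (tendsto_pi_nhds.2 fun p => ?_)
    exact ((hcadlag f hf p.1).1 _).comp (tendsto_stopMap_dyadicApprox p)
  rwa [← hΛC] at h

end StopMap

section SigmaFields

variable {Ω : Type*} {Λ : MeasurableSpace (Ω × ℝ≥0)} {S T U : Ω → ℝ≥0∞}

lemma measurable_prodMk_sigmaAt (t : ℝ≥0) :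
    Measurable[sigmaAt Λ t, Λ] fun ω : Ω => (ω, t) := by
  intro D hD
  exact (measurable_indicator_const_iff (1 : ℝ)).1 <|
    measurable_genBy_of_mem ⟨_, measurable_one.indicator hD, rfl⟩

lemma sigmaAt_le_sigmaInf (t : ℝ≥0) : sigmaAt Λ t ≤ sigmaInf Λ := le_iSup (sigmaAt Λ) t

lemma MeasurableProcessE.measurable_evalAt_sigmaAtTime {Z : Ω × ℝ≥0∞ → ℝ}
    (hZ : MeasurableProcessE Λ Z) (S : Ω → ℝ≥0∞) : Measurable[sigmaAtTime Λ S] (EvalAt Z S) :=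
  measurable_genBy_of_mem ⟨Z, hZ, rfl⟩

lemma measurableSet_le_sigmaAtTime (hU : IsStoppingTimeM Λ U) (S : Ω → ℝ≥0∞) :
    MeasurableSet[sigmaAtTime Λ S] {ω | U ω ≤ S ω} := by
  have hY : MeasurableProcessE Λ ({q : Ω × ℝ≥0∞ | U q.1 ≤ q.2}.indicator 1) :=
    ⟨measurable_one.indicator hU, by simp⟩
  exact (measurable_indicator_const_iff (1 : ℝ)).1 (hY.measurable_evalAt_sigmaAtTime S)

end SigmaFields

section MeyerProcesses

variable {Ω : Type*} [mΩ : MeasurableSpace Ω] {Λ : MeasurableSpace (Ω × ℝ≥0)}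
  {S T U : Ω → ℝ≥0∞}

lemma sigmaInf_le (hΛ : IsMeyer mΩ Λ) : sigmaInf Λ ≤ mΩ :=
  iSup_le fun _ => genBy_le fun _ ⟨_, hZ, hf⟩ =>
    hf ▸ (hZ.mono hΛ.le_prod le_rfl).comp measurable_prodMk_right

lemma MeasurableProcessE.measurable_evalAt_sigmaInf (hΛ : IsMeyer mΩ Λ) {W : Ω × ℝ≥0∞ → ℝ}
    (hW : MeasurableProcessE Λ W) (hU : IsStoppingTimeM Λ U) :
    Measurable[sigmaInf Λ] (EvalAt W U) := by
  set Wr : Ω × ℝ≥0 → ℝ := fun p => W (p.1, p.2)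
  have hWU : Measurable[Λ] (Wr ∘ stopMap U) := hW.1.comp (measurable_stopMap hΛ hU)
  have hG : ∀ n : ℕ, Measurable[sigmaInf Λ] fun ω =>
      if U ω ≤ (n : ℝ≥0) then (Wr ∘ stopMap U) (ω, n) else W (ω, ∞) := fun n =>
    Measurable.ite (sigmaAt_le_sigmaInf _ _ (measurable_prodMk_sigmaAt _ hU))
      ((hWU.comp (measurable_prodMk_sigmaAt _)).mono (sigmaAt_le_sigmaInf _) le_rfl) hW.2
  let := sigmaInf Λ
  refine measurable_of_tendsto_metrizable' atTop hG (tendsto_pi_nhds.2 fun ω => ?_)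
  refine tendsto_const_nhds.congr' ?_
  rcases eq_or_ne (U ω) ∞ with h | h
  · refine .of_forall fun n => ?_
    simp [EvalAt, h]
  · obtain ⟨N, hN⟩ := ENNReal.exists_nat_gt h
    filter_upwards [eventually_ge_atTop N] with n hn
    have hUn : U ω ≤ (n : ℝ≥0) := hN.le.trans (by exact_mod_cast hn)
    simp only [hUn, if_true, Function.comp_apply, Wr, coe_stopMap_snd, min_eq_right, EvalAt]
    rfl

lemma sigmaAtTime_le_sigmaInf (hΛ : IsMeyer mΩ Λ) (hS : IsStoppingTimeM Λ S) :
    sigmaAtTime Λ S ≤ sigmaInf Λ :=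
  genBy_le fun _ ⟨_, hZ, hf⟩ => hf ▸ hZ.measurable_evalAt_sigmaInf hΛ hS

lemma sigmaAtTime_le (hΛ : IsMeyer mΩ Λ) (hS : IsStoppingTimeM Λ S) : sigmaAtTime Λ S ≤ mΩ :=
  (sigmaAtTime_le_sigmaInf hΛ hS).trans (sigmaInf_le hΛ)

/-- The events `A` with `(A × [0,∞)) ∩ [[S,∞[[ ∈ Λ` form a σ-algebra, and it contains the
generators `{Z_S ∈ B}` of `F^Λ_S` since `Z_S` agrees on `[[S,∞[[` with the stopped process. -/
lemma measurableSet_inter_of_sigmaAtTime (hΛ : IsMeyer mΩ Λ) (hS : IsStoppingTimeM Λ S)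
    {A : Set Ω} (hA : MeasurableSet[sigmaAtTime Λ S] A) :
    MeasurableSet[Λ] {p : Ω × ℝ≥0 | p.1 ∈ A ∧ S p.1 ≤ p.2} := by
  refine genBy_le (m :=
    { MeasurableSet' := fun A => MeasurableSet[Λ] {p : Ω × ℝ≥0 | p.1 ∈ A ∧ S p.1 ≤ p.2}
      measurableSet_empty := by simp
      measurableSet_compl := fun A hA => by
        have : {p : Ω × ℝ≥0 | p.1 ∈ Aᶜ ∧ S p.1 ≤ p.2} =
            {p | S p.1 ≤ p.2} \ {p | p.1 ∈ A ∧ S p.1 ≤ p.2} := by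
          ext; simp only [mem_ofPred_eq, mem_compl_iff, Set.mem_sdiff]; tauto
        exact this ▸ hS.diff hA
      measurableSet_iUnion := fun A hA => by
        have : {p : Ω × ℝ≥0 | p.1 ∈ ⋃ i, A i ∧ S p.1 ≤ p.2} =
            ⋃ i, {p | p.1 ∈ A i ∧ S p.1 ≤ p.2} := by
          ext; simp
        exact this ▸ .iUnion hA }) ?_ A hA
  rintro _ ⟨Z, hZ, rfl⟩ B hB
  show MeasurableSet[Λ] {p : Ω × ℝ≥0 | p.1 ∈ EvalAt Z S ⁻¹' B ∧ S p.1 ≤ p.2}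
  have hZS : Measurable[Λ] ((fun p : Ω × ℝ≥0 => Z (p.1, p.2)) ∘ stopMap S) :=
    hZ.1.comp (measurable_stopMap hΛ hS)
  have : {p : Ω × ℝ≥0 | p.1 ∈ EvalAt Z S ⁻¹' B ∧ S p.1 ≤ p.2} =
      (fun p : Ω × ℝ≥0 => Z (p.1, p.2)) ∘ stopMap S ⁻¹' B ∩ {p | S p.1 ≤ p.2} := by
    ext p
    simp only [mem_ofPred_eq, mem_preimage, mem_inter_iff, Function.comp_apply,
      and_congr_left_iff]
    intro hSp
    rw [coe_stopMap_snd, min_eq_right hSp]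
    rfl
  rw [this]
  exact (hZS hB).inter hS

lemma IsStoppingTimeM.piecewise (hΛ : IsMeyer mΩ Λ) (hS : IsStoppingTimeM Λ S)
    {T₁ T₂ : Ω → ℝ≥0∞} (hT₁ : IsStoppingTimeM Λ T₁) (hT₂ : IsStoppingTimeM Λ T₂) {A : Set Ω}
    [DecidablePred (· ∈ A)] (hA : MeasurableSet[sigmaAtTime Λ S] A) (h₁ : ∀ ω ∈ A, S ω ≤ T₁ ω)
    (h₂ : ∀ ω ∉ A, S ω ≤ T₂ ω) : IsStoppingTimeM Λ (A.piecewise T₁ T₂) := by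
  have : {p : Ω × ℝ≥0 | A.piecewise T₁ T₂ p.1 ≤ p.2} =
      {p | p.1 ∈ A ∧ S p.1 ≤ p.2} ∩ {p | T₁ p.1 ≤ p.2} ∪
        {p | p.1 ∈ Aᶜ ∧ S p.1 ≤ p.2} ∩ {p | T₂ p.1 ≤ p.2} := by
    ext ⟨ω, t⟩
    by_cases hω : ω ∈ A
    · simpa [hω] using fun h => (h₁ ω hω).trans h
    · simpa [hω] using fun h => (h₂ ω hω).trans h
  unfold IsStoppingTimeM
  rw [this]
  exact ((measurableSet_inter_of_sigmaAtTime hΛ hS hA).inter hT₁).union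
    ((measurableSet_inter_of_sigmaAtTime hΛ hS hA.compl).inter hT₂)

end MeyerProcesses

section ConditionalExpectation

variable {α : Type*} {m m₀ : MeasurableSpace α} {μ : Measure α}

lemma ae_le_of_integral_max_le {f g : α → ℝ} (hf : Integrable f μ) (hg : Integrable g μ)
    (h : ∫ x, max (f x) (g x) ∂μ ≤ ∫ x, g x ∂μ) : f ≤ᵐ[μ] g := by
  have hmax : g =ᵐ[μ] fun x => max (f x) (g x) :=
    (integral_eq_iff_of_ae_le hg (hf.sup hg) (.of_forall fun x => le_max_right _ _)).1
      (le_antisymm (integral_mono hg (hf.sup hg) fun x => le_max_right _ _) h)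
  filter_upwards [hmax] with x hx
  exact hx ▸ le_max_left _ _

lemma condExp_piecewise (hm : m ≤ m₀) {A : Set α} [DecidablePred (· ∈ A)]
    (hA : MeasurableSet[m] A) {f g : α → ℝ} (hf : Integrable f μ) (hg : Integrable g μ) :
    μ[A.piecewise f g|m] =ᵐ[μ] A.piecewise (μ[f|m]) (μ[g|m]) := by
  have split : ∀ φ ψ : α → ℝ, A.piecewise φ ψ = A.indicator φ + Aᶜ.indicator ψ := fun φ ψ =>
    funext fun x => by by_cases hx : x ∈ A <;> simp [hx]
  rw [split, split]
  filter_upwards [condExp_add (hf.indicator (hm _ hA)) (hg.indicator (hm _ hA.compl)) m,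
    condExp_indicator hf hA, condExp_indicator hg hA.compl] with x hadd h₁ h₂
  rw [hadd, Pi.add_apply, h₁, h₂, Pi.add_apply]

end ConditionalExpectation

section Stopped

variable {Ω : Type*} {S U : Ω → ℝ≥0∞} {Y : Ω × ℝ≥0∞ → ℝ}

def stoppedProcess (Y : Ω × ℝ≥0∞ → ℝ) (U : Ω → ℝ≥0∞) : Ω × ℝ≥0∞ → ℝ :=
  fun p => Y (p.1, min p.2 (U p.1))

lemma evalAt_stoppedProcess : EvalAt (stoppedProcess Y U) S = EvalAt Y (S ⊓ U) := rfl

lemma evalAt_stoppedProcess_of_le (h : S ≤ U) : EvalAt (stoppedProcess Y U) S = EvalAt Y S :=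
  funext fun ω => by simp [EvalAt, stoppedProcess, min_eq_left (h ω)]

lemma evalAt_stoppedProcess_of_ge (h : U ≤ S) : EvalAt (stoppedProcess Y U) S = EvalAt Y U :=
  funext fun ω => by simp [EvalAt, stoppedProcess, min_eq_right (h ω)]

/-- On `{U ≤ S}` the stopped process is frozen after `S`; elsewhere `Y_{T ∧ U}` is `Y` at a
time that lies above `S`. -/
lemma evalAt_stoppedProcess_eq_piecewise {T : Ω → ℝ≥0∞} (hST : S ≤ T) :
    EvalAt (stoppedProcess Y U) T = {ω | U ω ≤ S ω}.piecewise (EvalAt (stoppedProcess Y U) S)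
      (EvalAt Y ({ω | U ω ≤ S ω}.piecewise S (T ⊓ U))) := by
  ext ω
  by_cases hω : U ω ≤ S ω
  · simp [hω, EvalAt, stoppedProcess, min_eq_right (hω.trans (hST ω))]
  · simp [hω, EvalAt, stoppedProcess]

lemma le_piecewise_inf {T : Ω → ℝ≥0∞} (hST : S ≤ T) :
    S ≤ {ω | U ω ≤ S ω}.piecewise S (T ⊓ U) := fun ω => by
  by_cases hω : U ω ≤ S ω
  · simp [hω]
  · simpa [hω] using le_inf (hST ω) (not_le.1 hω).le

end Stopped

lemma MeasurableProcessE.stoppedProcess {Ω : Type*} [mΩ : MeasurableSpace Ω]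
    {Λ : MeasurableSpace (Ω × ℝ≥0)} (hΛ : IsMeyer mΩ Λ) {W : Ω × ℝ≥0∞ → ℝ}
    (hW : MeasurableProcessE Λ W) {U : Ω → ℝ≥0∞} (hU : IsStoppingTimeM Λ U) :
    MeasurableProcessE Λ (stoppedProcess W U) := by
  constructor
  · convert hW.1.comp (measurable_stopMap hΛ hU) using 1
    ext p
    simp only [Function.comp_apply, coe_stopMap_snd]
    rfl
  · show Measurable[sigmaInf Λ] (EvalAt (Meyer.stoppedProcess W U) ⊤)
    rw [evalAt_stoppedProcess_of_ge (S := ⊤) fun _ => le_top]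
    exact hW.measurable_evalAt_sigmaInf hΛ hU

section Martingales

variable {Ω : Type*} [mΩ : MeasurableSpace Ω] {P : Measure Ω} [IsFiniteMeasure P]
  {Λ : MeasurableSpace (Ω × ℝ≥0)} {R S T U : Ω → ℝ≥0∞} {Y : Ω × ℝ≥0∞ → ℝ}

namespace IsSupermartingaleM

lemma integral_le (hΛ : IsMeyer mΩ Λ) (hY : IsSupermartingaleM P Λ Y)
    (hS : IsStoppingTimeM Λ S) (hT : IsStoppingTimeM Λ T) (hST : S ≤ T) :
    ∫ ω, EvalAt Y T ω ∂P ≤ ∫ ω, EvalAt Y S ω ∂P :=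
  calc ∫ ω, EvalAt Y T ω ∂P = ∫ ω, P[EvalAt Y T|sigmaAtTime Λ S] ω ∂P :=
        (integral_condExp (sigmaAtTime_le hΛ hS)).symm
    _ ≤ ∫ ω, EvalAt Y S ω ∂P :=
        integral_mono_ae integrable_condExp (hY.2.1 S hS) (hY.2.2 S T hS hT hST)

lemma stoppedProcess (hΛ : IsMeyer mΩ Λ) (hY : IsSupermartingaleM P Λ Y)
    (hU : IsStoppingTimeM Λ U) : IsSupermartingaleM P Λ (stoppedProcess Y U) := by
  have hYU := MeasurableProcessE.stoppedProcess hΛ hY.1 hU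
  refine ⟨hYU, fun S hS => hY.2.1 _ (hS.inf hU), fun S T hS hT hST => ?_⟩
  set A := {ω | U ω ≤ S ω}
  have hA : MeasurableSet[sigmaAtTime Λ S] A := measurableSet_le_sigmaAtTime hU S
  have hT' : IsStoppingTimeM Λ (A.piecewise S (T ⊓ U)) :=
    hS.piecewise hΛ hS (hT.inf hU) hA (fun _ _ => le_rfl)
      fun ω hω => le_inf (hST ω) (not_le.1 hω).le
  have hfixed : P[EvalAt (Meyer.stoppedProcess Y U) S|sigmaAtTime Λ S] =
      EvalAt (Meyer.stoppedProcess Y U) S :=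
    condExp_of_stronglyMeasurable (sigmaAtTime_le hΛ hS)
      (hYU.measurable_evalAt_sigmaAtTime S).stronglyMeasurable (hY.2.1 _ (hS.inf hU))
  rw [evalAt_stoppedProcess_eq_piecewise hST]
  filter_upwards [condExp_piecewise (f := EvalAt (Meyer.stoppedProcess Y U) S)
    (sigmaAtTime_le hΛ hS) hA (hY.2.1 _ (hS.inf hU)) (hY.2.1 _ hT'),
    hY.2.2 S _ hS hT' (le_piecewise_inf hST)] with ω hω hle
  rw [hω, hfixed]
  by_cases hωA : ω ∈ A
  · simp [hωA]
  · have hSU : S ω < U ω := not_le.1 hωA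
    rw [piecewise_eq_of_notMem _ _ _ hωA, evalAt_stoppedProcess, EvalAt, Pi.inf_apply,
      inf_eq_left.2 hSU.le]
    exact hle

lemma isMartingaleM_of_integral_eq (hΛ : IsMeyer mΩ Λ) (hY : IsSupermartingaleM P Λ Y) {c : ℝ}
    (hc : ∀ R, IsStoppingTimeM Λ R → ∫ ω, EvalAt Y R ω ∂P = c) : IsMartingaleM P Λ Y :=
  ⟨hY.1, hY.2.1, fun S T hS hT hST =>
    ((integral_eq_iff_of_ae_le integrable_condExp (hY.2.1 S hS) (hY.2.2 S T hS hT hST)).1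
      (by rw [integral_condExp (sigmaAtTime_le hΛ hS), hc T hT, hc S hS])).symm⟩

end IsSupermartingaleM

lemma IsMartingaleM.integral_eq (hΛ : IsMeyer mΩ Λ) (hY : IsMartingaleM P Λ Y)
    (hS : IsStoppingTimeM Λ S) (hT : IsStoppingTimeM Λ T) (hST : S ≤ T) :
    ∫ ω, EvalAt Y S ω ∂P = ∫ ω, EvalAt Y T ω ∂P := by
  rw [integral_congr_ae (hY.2.2 S T hS hT hST), integral_condExp (sigmaAtTime_le hΛ hS)]

end Martingales

lemma ClassDSys.integrable {Ω : Type*} [MeasurableSpace Ω] {P : Measure Ω}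
    {Λ : MeasurableSpace (Ω × ℝ≥0)} {ZS : (Ω → ℝ≥0∞) → Ω → ℝ} (hD : ClassDSys P Λ ZS)
    {S : Ω → ℝ≥0∞} (hS : IsStoppingTimeM Λ S) : Integrable (ZS S) P :=
  memLp_one_iff_integrable.1 (hD.memLp ⟨S, hS⟩)

section Snell

variable {Ω : Type*} [mΩ : MeasurableSpace Ω] {P : Measure Ω} [IsFiniteMeasure P]
  {Λ : MeasurableSpace (Ω × ℝ≥0)} {R S T U : Ω → ℝ≥0∞} {ZS : (Ω → ℝ≥0∞) → Ω → ℝ}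
  {Zb : Ω × ℝ≥0∞ → ℝ}

lemma IsSnellSys.ae_le_evalAt (hΛ : IsMeyer mΩ Λ) (hZb : IsSnellSys P Λ ZS Zb)
    (hsys : IsSystemM P Λ ZS) (hS : IsStoppingTimeM Λ S) (hint : Integrable (ZS S) P) :
    ZS S ≤ᵐ[P] EvalAt Zb S := by
  have h := (hZb.2 S hS).1 S hS le_rfl
  rwa [condExp_of_stronglyMeasurable (sigmaAtTime_le hΛ hS) (hsys.2 S hS).stronglyMeasurable
    hint] at h

/-- Pasting `T` and `U` along the `F^Λ_R`-measurable set where `E[Z(T) | F^Λ_R]` is the larger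
one produces a stopping time whose conditional reward is the maximum of the two. -/
lemma IsSystemM.condExp_ae_le_of_forall_integral_le (hΛ : IsMeyer mΩ Λ)
    (hsys : IsSystemM P Λ ZS) (hint : ∀ S, IsStoppingTimeM Λ S → Integrable (ZS S) P)
    (hR : IsStoppingTimeM Λ R) (hT : IsStoppingTimeM Λ T) (hU : IsStoppingTimeM Λ U)
    (hRT : R ≤ T) (hRU : R ≤ U)
    (hmax : ∀ S, IsStoppingTimeM Λ S → ∫ ω, ZS S ω ∂P ≤ ∫ ω, ZS U ω ∂P) :
    P[ZS T|sigmaAtTime Λ R] ≤ᵐ[P] P[ZS U|sigmaAtTime Λ R] := by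
  have hm := sigmaAtTime_le hΛ hR
  set gT := P[ZS T|sigmaAtTime Λ R]
  set gU := P[ZS U|sigmaAtTime Λ R]
  set A := {ω | gU ω < gT ω}
  have hA : MeasurableSet[sigmaAtTime Λ R] A :=
    measurableSet_lt stronglyMeasurable_condExp.measurable stronglyMeasurable_condExp.measurable
  have hT' : IsStoppingTimeM Λ (A.piecewise T U) :=
    hR.piecewise hΛ hT hU hA (fun ω _ => hRT ω) (fun ω _ => hRU ω)
  have hpaste : ZS (A.piecewise T U) =ᵐ[P] A.piecewise (ZS T) (ZS U) := by
    filter_upwards [hsys.1 _ T hT' hT, hsys.1 _ U hT' hU] with ω h₁ h₂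
    by_cases hω : ω ∈ A
    · simp [hω, h₁ (piecewise_eq_of_mem _ _ _ hω)]
    · simp [hω, h₂ (piecewise_eq_of_notMem _ _ _ hω)]
  have hcond : P[ZS (A.piecewise T U)|sigmaAtTime Λ R] =ᵐ[P] fun ω => max (gT ω) (gU ω) := by
    refine (condExp_congr_ae hpaste).trans
      ((condExp_piecewise hm hA (hint T hT) (hint U hU)).trans (.of_forall fun ω => ?_))
    by_cases hω : ω ∈ A
    · rw [piecewise_eq_of_mem _ _ _ hω]
      exact (max_eq_left (show gU ω < gT ω from hω).le).symm
    · rw [piecewise_eq_of_notMem _ _ _ hω]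
      exact (max_eq_right (not_lt.1 (show ¬gU ω < gT ω from hω))).symm
  refine ae_le_of_integral_max_le integrable_condExp integrable_condExp ?_
  calc ∫ ω, max (gT ω) (gU ω) ∂P = ∫ ω, ZS (A.piecewise T U) ω ∂P := by
        rw [← integral_congr_ae hcond, integral_condExp hm]
    _ ≤ ∫ ω, ZS U ω ∂P := hmax _ hT'
    _ = ∫ ω, gU ω ∂P := (integral_condExp hm).symm

lemma IsSnellSys.integral_evalAt_zero_le_of_forall_integral_le (hΛ : IsMeyer mΩ Λ)
    (hZb : IsSnellSys P Λ ZS Zb) (hsys : IsSystemM P Λ ZS)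
    (hint : ∀ S, IsStoppingTimeM Λ S → Integrable (ZS S) P) (hU : IsStoppingTimeM Λ U)
    (hmax : ∀ S, IsStoppingTimeM Λ S → ∫ ω, ZS S ω ∂P ≤ ∫ ω, ZS U ω ∂P) :
    ∫ ω, EvalAt Zb 0 ω ∂P ≤ ∫ ω, ZS U ω ∂P := by
  have h0 : EvalAt Zb 0 ≤ᵐ[P] P[ZS U|sigmaAtTime Λ 0] :=
    (hZb.2 0 .zero).2 _ fun T hT _ => hsys.condExp_ae_le_of_forall_integral_le hΛ hint .zero hT
      hU (fun _ => zero_le) (fun _ => zero_le) hmax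
  calc ∫ ω, EvalAt Zb 0 ω ∂P ≤ ∫ ω, P[ZS U|sigmaAtTime Λ 0] ω ∂P :=
        integral_mono_ae (hZb.1.2.1 0 .zero) integrable_condExp h0
    _ = ∫ ω, ZS U ω ∂P := integral_condExp (sigmaAtTime_le hΛ .zero)

end Snell

variable {Ω : Type*} [mΩ : MeasurableSpace Ω]

theorem statement9_general (P : Measure Ω) [IsProbabilityMeasure P]
    (Λ : MeasurableSpace (Ω × ℝ≥0)) (hΛ : IsMeyer mΩ Λ)
    (ZS : (Ω → ℝ≥0∞) → Ω → ℝ) (hsys : IsSystemM P Λ ZS)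
    (hD : ClassDSys P Λ ZS)
    (Zb : Ω × ℝ≥0∞ → ℝ) (hZb : IsSnellSys P Λ ZS Zb)
    (Ub : Ω → ℝ≥0∞) (hUb : IsStoppingTimeM Λ Ub) :
    (∀ S, IsStoppingTimeM Λ S → ∫ ω, ZS S ω ∂P ≤ ∫ ω, ZS Ub ω ∂P) ↔
      (ZS Ub =ᵐ[P] EvalAt Zb Ub ∧
        IsMartingaleM P Λ fun p => Zb (p.1, min p.2 (Ub p.1))) := by
  have hint : ∀ S, IsStoppingTimeM Λ S → Integrable (ZS S) P := fun S hS => hD.integrable hS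
  have hZS_le : ∀ S, IsStoppingTimeM Λ S → ZS S ≤ᵐ[P] EvalAt Zb S := fun S hS =>
    hZb.ae_le_evalAt hΛ hsys hS (hint S hS)
  constructor
  · intro hmax
    have hvalue := hZb.integral_evalAt_zero_le_of_forall_integral_le hΛ hsys hint hUb hmax
    have hUb_le := integral_mono_ae (hint Ub hUb) (hZb.1.2.1 Ub hUb) (hZS_le Ub hUb)
    have hstop : ∀ R, IsStoppingTimeM Λ R →
        ∫ ω, EvalAt (stoppedProcess Zb Ub) R ω ∂P = ∫ ω, ZS Ub ω ∂P := fun R hR => by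
      rw [evalAt_stoppedProcess]
      exact le_antisymm ((hZb.1.integral_le hΛ .zero (hR.inf hUb) fun _ => zero_le).trans hvalue)
          (hUb_le.trans (hZb.1.integral_le hΛ (hR.inf hUb) hUb fun _ => inf_le_right))
    refine ⟨(integral_eq_iff_of_ae_le (hint Ub hUb) (hZb.1.2.1 Ub hUb) (hZS_le Ub hUb)).1 ?_,
      (IsSupermartingaleM.stoppedProcess hΛ hZb.1 hUb).isMartingaleM_of_integral_eq hΛ hstop⟩
    rw [← evalAt_stoppedProcess_of_ge (S := ⊤) fun _ => le_top, hstop ⊤ .top]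
  · rintro ⟨hopt, hmart⟩ S hS
    calc ∫ ω, ZS S ω ∂P ≤ ∫ ω, EvalAt Zb S ω ∂P :=
          integral_mono_ae (hint S hS) (hZb.1.2.1 S hS) (hZS_le S hS)
      _ ≤ ∫ ω, EvalAt Zb 0 ω ∂P := hZb.1.integral_le hΛ .zero hS fun _ => zero_le
      _ = ∫ ω, EvalAt (stoppedProcess Zb Ub) ⊤ ω ∂P := by
          rw [← evalAt_stoppedProcess_of_le (S := 0) (U := Ub) fun _ => zero_le]
          exact hmart.integral_eq hΛ .zero .top fun _ => le_top
      _ = ∫ ω, ZS Ub ω ∂P := by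
          rw [evalAt_stoppedProcess_of_ge (S := ⊤) fun _ => le_top, integral_congr_ae hopt]

/-- **Optimality criterion.** `Ū` maximizes `E[Z(S)]` over `Λ`-stopping
times iff `Z(Ū) = Z̄_Ū` a.s. and the stopped Snell envelope is a `Λ`-martingale. -/
theorem statement9 (P : Measure Ω) [IsProbabilityMeasure P] [hPc : P.IsComplete]
    (Λ : MeasurableSpace (Ω × ℝ≥0)) (hΛ : IsMeyer mΩ Λ) (hcomp : IsPCompleteM P Λ)
    (ZS : (Ω → ℝ≥0∞) → Ω → ℝ) (hsys : IsSystemM P Λ ZS)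
    (hpos : ∀ S, IsStoppingTimeM Λ S → 0 ≤ᵐ[P] ZS S)
    (hD : ClassDSys P Λ ZS)
    (Zb : Ω × ℝ≥0∞ → ℝ) (hZb : IsSnellSys P Λ ZS Zb)
    (Ub : Ω → ℝ≥0∞) (hUb : IsStoppingTimeM Λ Ub) :
    (∀ S, IsStoppingTimeM Λ S → ∫ ω, ZS S ω ∂P ≤ ∫ ω, ZS Ub ω ∂P) ↔
      (ZS Ub =ᵐ[P] EvalAt Zb Ub ∧
        IsMartingaleM P Λ fun p => Zb (p.1, min p.2 (Ub p.1))) :=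
  statement9_general P Λ hΛ ZS hsys hD Zb hZb Ub hUb

end Meyer
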